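/- arXiv:2411.10141 — 5 statements merged into one kernel-verified Lean document; each statement's English description precedes it below -/
import Mathlib

section
/- Assume λ_1 is the unique largest eigenvalue of the family (λ_1 > μ_1, and λ_1 > λ_i and λ_1 > μ_i for all i ≥ 2), and assume u_1 = (1,0)ᵀ. For ε ∈ ℝ let w_ε := (1/√(1+ε²))·(1, ε)ᵀ. Then for every ε ∈ ℝ, the Rayleigh quotient ratio (w_εᵀ E_m w_ε) / ((1,0) E_m (1,0)ᵀ) tends to 1/(1+ε²) as m → ∞. (This expresses that the major eigenvector of E_m tends to u_1 as m → ∞.) -/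
/-! Rows `u, v` of an orthogonal matrix diagonalize `Xmat λ μ u v`, so
`exp (m • X_i) = e^{m λ_i} u_i u_iᵀ + e^{m μ_i} v_i v_iᵀ` and every quadratic form
`w ⬝ᵥ E_m w` is the exponential sum `∑ e^{m λ_i} (u_i ⬝ᵥ w)² + e^{m μ_i} (v_i ⬝ᵥ w)²`.
After dividing by `e^{m λ_1}` only the dominant term survives as `m → ∞`, so the ratio tends to
`(u_1 ⬝ᵥ w_ε)² / (u_1 ⬝ᵥ (1,0))² = 1 / (1 + ε²)`. -/

open Matrix Filter

/-- The symmetric 2×2 matrix with spectral data `λ, μ, u, v`. -/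
noncomputable def Xmat (lam mu : ℝ) (u v : Fin 2 → ℝ) : Matrix (Fin 2) (Fin 2) ℝ :=
  lam • vecMulVec u u + mu • vecMulVec v v

/-- `E_m = Σ_i exp(m·X_i)`. -/
noncomputable def Efam {k : ℕ} (lam mu : Fin k → ℝ) (u v : Fin k → Fin 2 → ℝ)
    (m : ℝ) : Matrix (Fin 2) (Fin 2) ℝ :=
  ∑ i, NormedSpace.exp (m • Xmat (lam i) (mu i) (u i) (v i))

lemma Xmat_eq_transpose_mul_diagonal_mul (lam mu : ℝ) (u v : Fin 2 → ℝ) :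
    Xmat lam mu u v = (of ![u, v])ᵀ * diagonal ![lam, mu] * of ![u, v] := by
  ext i j
  fin_cases i <;> fin_cases j <;>
    simp [Xmat, mul_apply, Fin.sum_univ_two, vecMulVec] <;> ring

lemma of_mul_transpose_eq_one {u v : Fin 2 → ℝ} (hu : u ⬝ᵥ u = 1) (hv : v ⬝ᵥ v = 1)
    (huv : u ⬝ᵥ v = 0) : of ![u, v] * (of ![u, v])ᵀ = 1 := by
  ext i j
  fin_cases i <;> fin_cases j <;>
    simp [mul_apply, ← dotProduct.eq_1, dotProduct_comm v u, hu, hv, huv]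

lemma exp_Xmat {u v : Fin 2 → ℝ} (hu : u ⬝ᵥ u = 1) (hv : v ⬝ᵥ v = 1) (huv : u ⬝ᵥ v = 0)
    (lam mu : ℝ) :
    NormedSpace.exp (Xmat lam mu u v) = Xmat (Real.exp lam) (Real.exp mu) u v := by
  set U := (of ![u, v])ᵀ
  have hUU : U * Uᵀ = 1 := mul_eq_one_comm.mp (of_mul_transpose_eq_one hu hv huv)
  have hUinv : U⁻¹ = Uᵀ := inv_eq_right_inv hUU
  have hconj (a b : ℝ) : Xmat a b u v = U * diagonal ![a, b] * U⁻¹ := by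
    rw [hUinv, transpose_transpose, Xmat_eq_transpose_mul_diagonal_mul]
  have hexp : (NormedSpace.exp ![lam, mu] : Fin 2 → ℝ) = ![Real.exp lam, Real.exp mu] := by
    ext i
    fin_cases i <;> simp [Pi.coe_exp, Real.exp_eq_exp_ℝ]
  rw [hconj, hconj, exp_conj U _ (IsUnit.of_mul_eq_one _ hUU), exp_diagonal, hexp]

lemma dotProduct_Xmat_mulVec (a b : ℝ) (u v w : Fin 2 → ℝ) :
    w ⬝ᵥ (Xmat a b u v *ᵥ w) = a * (u ⬝ᵥ w) ^ 2 + b * (v ⬝ᵥ w) ^ 2 := by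
  simp only [Xmat, add_mulVec, smul_mulVec, vecMulVec_mulVec, dotProduct_add,
    dotProduct_smul, dotProduct_comm w u, dotProduct_comm w v, smul_eq_mul, op_smul_eq_mul]
  ring

lemma smul_Xmat (m lam mu : ℝ) (u v : Fin 2 → ℝ) :
    m • Xmat lam mu u v = Xmat (m * lam) (m * mu) u v := by
  simp only [Xmat, smul_add, smul_smul]

lemma dotProduct_Efam_mulVec {k : ℕ} (lam mu : Fin k → ℝ) {u v : Fin k → Fin 2 → ℝ}
    (hu : ∀ i, u i ⬝ᵥ u i = 1) (hv : ∀ i, v i ⬝ᵥ v i = 1) (huv : ∀ i, u i ⬝ᵥ v i = 0)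
    (m : ℝ) (w : Fin 2 → ℝ) :
    w ⬝ᵥ (Efam lam mu u v m *ᵥ w) =
      ∑ i, (Real.exp (m * lam i) * (u i ⬝ᵥ w) ^ 2 + Real.exp (m * mu i) * (v i ⬝ᵥ w) ^ 2) := by
  simp only [Efam, sum_mulVec, dotProduct_sum, smul_Xmat, exp_Xmat (hu _) (hv _) (huv _),
    dotProduct_Xmat_mulVec]

lemma tendsto_exp_mul_div_exp_mul {a b : ℝ} (h : a < b) :
    Tendsto (fun m => Real.exp (m * a) / Real.exp (m * b)) atTop (nhds 0) := by
  simp only [← Real.exp_sub, ← mul_sub]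
  exact Real.tendsto_exp_atBot.comp (tendsto_id.atTop_mul_const_of_neg (sub_neg.mpr h))

lemma tendsto_sum_exp_div_exp_of_dominant {ι : Type*} [Fintype ι] (i₀ : ι) {lam mu : ι → ℝ}
    (hmu : mu i₀ < lam i₀) (hmax : ∀ i, i ≠ i₀ → lam i < lam i₀ ∧ mu i < lam i₀)
    (p q : ι → ℝ) :
    Tendsto (fun m => (∑ i, (Real.exp (m * lam i) * p i + Real.exp (m * mu i) * q i)) /
      Real.exp (m * lam i₀)) atTop (nhds (p i₀)) := by
  classical
  have hterm (i : ι) : Tendsto (fun m => Real.exp (m * lam i) / Real.exp (m * lam i₀) * p i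
      + Real.exp (m * mu i) / Real.exp (m * lam i₀) * q i) atTop
      (nhds (if i = i₀ then p i₀ else 0)) := by
    rcases eq_or_ne i i₀ with rfl | hi
    · simpa only [div_self (Real.exp_ne_zero _), one_mul, zero_mul, add_zero,
        if_pos] using
        ((tendsto_exp_mul_div_exp_mul hmu).mul_const (q i)).const_add (p i)
    · simpa [hi] using
        ((tendsto_exp_mul_div_exp_mul (hmax i hi).1).mul_const (p i)).add
          ((tendsto_exp_mul_div_exp_mul (hmax i hi).2).mul_const (q i))
  simpa only [Finset.sum_div, add_div, div_mul_eq_mul_div, Finset.sum_ite_eq', Finset.mem_univ,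
    if_true] using tendsto_finsetSum Finset.univ fun i _ => hterm i

theorem rayleigh_ratio_tendsto_general (n : ℕ) (lam mu : Fin (n + 1) → ℝ)
    (u v : Fin (n + 1) → Fin 2 → ℝ)
    (hu : ∀ i, u i ⬝ᵥ u i = 1) (hv : ∀ i, v i ⬝ᵥ v i = 1)
    (huv : ∀ i, u i ⬝ᵥ v i = 0)
    (hmu : mu 0 < lam 0)
    (hmax : ∀ i, i ≠ 0 → lam i < lam 0 ∧ mu i < lam 0)
    (hu0 : u 0 = ![1, 0]) (ε : ℝ) :
    Tendsto
      (fun m : ℝ =>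
        (((Real.sqrt (1 + ε ^ 2))⁻¹ • ![1, ε]) ⬝ᵥ
            (Efam lam mu u v m *ᵥ ((Real.sqrt (1 + ε ^ 2))⁻¹ • ![1, ε]))) /
          (![1, 0] ⬝ᵥ (Efam lam mu u v m *ᵥ ![1, 0])))
      atTop (nhds (1 / (1 + ε ^ 2))) := by
  set w : Fin 2 → ℝ := (Real.sqrt (1 + ε ^ 2))⁻¹ • ![1, ε]
  have hw : (u 0 ⬝ᵥ w) ^ 2 = 1 / (1 + ε ^ 2) := by
    simp [w, hu0, inv_pow, Real.sq_sqrt (by positivity : (0 : ℝ) ≤ 1 + ε ^ 2)]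
  have hdominant (x : Fin 2 → ℝ) := tendsto_sum_exp_div_exp_of_dominant 0 hmu hmax
    (fun i => (u i ⬝ᵥ x) ^ 2) (fun i => (v i ⬝ᵥ x) ^ 2)
  have he : u 0 ⬝ᵥ ![1, 0] = 1 := by simp [hu0]
  have hlim := (hdominant w).div (hdominant ![1, 0]) (by simp [he])
  rw [hw, he, one_pow, div_one] at hlim
  refine hlim.congr fun m => ?_
  rw [Pi.div_apply, div_div_div_cancel_right₀ (Real.exp_ne_zero _),
    dotProduct_Efam_mulVec lam mu hu hv huv, dotProduct_Efam_mulVec lam mu hu hv huv]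

/-- Lemma 1: if `λ_1` is the unique largest eigenvalue and
`u_1 = (1,0)ᵀ`, then for every `ε` the Rayleigh-quotient ratio
`(w_εᵀ E_m w_ε)/((1,0) E_m (1,0)ᵀ)` tends to `1/(1+ε²)` as `m → ∞`. -/
theorem rayleigh_ratio_tendsto (n : ℕ) (lam mu : Fin (n + 1) → ℝ)
    (u v : Fin (n + 1) → Fin 2 → ℝ)
    (hu : ∀ i, u i ⬝ᵥ u i = 1) (hv : ∀ i, v i ⬝ᵥ v i = 1)
    (huv : ∀ i, u i ⬝ᵥ v i = 0) (hle : ∀ i, mu i ≤ lam i)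
    (hmu : mu 0 < lam 0)
    (hmax : ∀ i, i ≠ 0 → lam i < lam 0 ∧ mu i < lam 0)
    (hu0 : u 0 = ![1, 0]) (ε : ℝ) :
    Tendsto
      (fun m : ℝ =>
        (((Real.sqrt (1 + ε ^ 2))⁻¹ • ![1, ε]) ⬝ᵥ
            (Efam lam mu u v m *ᵥ ((Real.sqrt (1 + ε ^ 2))⁻¹ • ![1, ε]))) /
          (![1, 0] ⬝ᵥ (Efam lam mu u v m *ᵥ ![1, 0])))
      atTop (nhds (1 / (1 + ε ^ 2))) :=
  rayleigh_ratio_tendsto_general n lam mu u v hu hv huv hmu hmax hu0 ε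
end

section
/- Assume λ_1 is the unique largest eigenvalue of the family (λ_1 > μ_1, and λ_1 > λ_i and λ_1 > μ_i for all i ≥ 2). Then (1/m)·log( λmax(E_m) ) tends to λ_1 as m → ∞. (This is Lemma 2: the major eigenvalue of the log-exp-supremum equals λ_1.) -/
open Matrix Filter

/-- Largest eigenvalue of a real 2×2 matrix via trace and determinant. -/
noncomputable def lmax (M : Matrix (Fin 2) (Fin 2) ℝ) : ℝ :=
  (M.trace + Real.sqrt (M.trace ^ 2 - 4 * M.det)) / 2

namespace Matrix

variable {ι : Type*} [Fintype ι] [DecidableEq ι]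

theorem sum_smul_vecMulVec_eq_transpose_mul_diagonal_mul {R : Type*} [CommSemiring R]
    (w : ι → ι → R) (d : ι → R) :
    ∑ k, d k • vecMulVec (w k) (w k) = (of w)ᵀ * diagonal d * of w := by
  rw [Matrix.mul_assoc]
  ext i j
  simp [sum_apply, mul_apply, diagonal_apply, vecMulVec_apply, mul_left_comm]

theorem exp_sum_smul_vecMulVec (w : ι → ι → ℝ) (hw : of w * (of w)ᵀ = 1) (d : ι → ℝ) :
    NormedSpace.exp (∑ k, d k • vecMulVec (w k) (w k)) =
      ∑ k, Real.exp (d k) • vecMulVec (w k) (w k) := by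
  have hunit : IsUnit (of w)ᵀ := ⟨⟨_, _, mul_eq_one_comm.mp hw, hw⟩, rfl⟩
  have hinv : (of w)ᵀ⁻¹ = of w := inv_eq_left_inv hw
  have hexp : NormedSpace.exp d = fun k => Real.exp (d k) := by
    funext k; rw [Pi.coe_exp, Real.exp_eq_exp_ℝ]
  simp_rw [sum_smul_vecMulVec_eq_transpose_mul_diagonal_mul]
  simpa only [hinv, exp_diagonal, hexp] using exp_conj _ (diagonal d) hunit

end Matrix

theorem tendsto_log_div_of_mul_exp_le_of_le_mul_exp {g : ℝ → ℝ} {a b L : ℝ} (ha : 0 < a)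
    (hlow : ∀ᶠ m in atTop, a * Real.exp (m * L) ≤ g m)
    (hup : ∀ᶠ m in atTop, g m ≤ b * Real.exp (m * L)) :
    Tendsto (fun m => Real.log (g m) / m) atTop (nhds L) := by
  obtain ⟨m, hm_low, hm_up⟩ := (hlow.and hup).exists
  have hb : 0 < b := ha.trans_le (le_of_mul_le_mul_right (hm_low.trans hm_up) (Real.exp_pos _))
  have hbound : ∀ c, 0 < c →
      Tendsto (fun m => Real.log (c * Real.exp (m * L)) / m) atTop (nhds L) := by
    intro c hc
    have h : Tendsto (fun m => L + Real.log c / m) atTop (nhds (L + 0)) :=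
      tendsto_const_nhds.add (tendsto_const_nhds.div_atTop tendsto_id)
    rw [add_zero] at h
    refine h.congr' ?_
    filter_upwards [eventually_gt_atTop 0] with m hm
    rw [Real.log_mul hc.ne' (Real.exp_ne_zero _), Real.log_exp]
    field_simp
    ring
  refine tendsto_of_tendsto_of_tendsto_of_le_of_le' (hbound a ha) (hbound b hb) ?_ ?_
  · filter_upwards [hlow, eventually_gt_atTop 0] with m hm hm0
    exact div_le_div_of_nonneg_right (Real.log_le_log (by positivity) hm) hm0.le
  · filter_upwards [hlow, hup, eventually_gt_atTop 0] with m hm hm' hm0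
    have hg : 0 < g m := (by positivity : 0 < a * Real.exp (m * L)).trans_le hm
    exact div_le_div_of_nonneg_right (Real.log_le_log hg hm') hm0.le

theorem trace_div_two_le_lmax (M : Matrix (Fin 2) (Fin 2) ℝ) : M.trace / 2 ≤ lmax M := by
  have := Real.sqrt_nonneg (M.trace ^ 2 - 4 * M.det)
  rw [lmax]
  linarith

theorem lmax_le_trace {M : Matrix (Fin 2) (Fin 2) ℝ} (hM : M.PosSemidef) : lmax M ≤ M.trace := by
  have htr := hM.trace_nonneg
  have hsqrt : Real.sqrt (M.trace ^ 2 - 4 * M.det) ≤ M.trace :=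
    Real.sqrt_le_iff.mpr ⟨htr, by nlinarith [hM.det_nonneg]⟩
  rw [lmax]
  linarith

theorem exp_smul_Xmat (m lam mu : ℝ) {u v : Fin 2 → ℝ}
    (hu : u ⬝ᵥ u = 1) (hv : v ⬝ᵥ v = 1) (huv : u ⬝ᵥ v = 0) :
    NormedSpace.exp (m • Xmat lam mu u v) =
      Real.exp (m * lam) • vecMulVec u u + Real.exp (m * mu) • vecMulVec v v := by
  have hvu : v ⬝ᵥ u = 0 := dotProduct_comm v u ▸ huv
  have horth : of ![u, v] * (of ![u, v])ᵀ = 1 := by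
    ext i j
    fin_cases i <;> fin_cases j <;> simp_all [mul_apply']
  have h := exp_sum_smul_vecMulVec ![u, v] horth ![m * lam, m * mu]
  simp only [Fin.sum_univ_two] at h
  simpa [Xmat, smul_add, smul_smul] using h

section Efam

variable {k : ℕ} (lam mu : Fin k → ℝ) {u v : Fin k → Fin 2 → ℝ}
  (hu : ∀ i, u i ⬝ᵥ u i = 1) (hv : ∀ i, v i ⬝ᵥ v i = 1) (huv : ∀ i, u i ⬝ᵥ v i = 0)

include hu hv huv

theorem Efam_eq (m : ℝ) :
    Efam lam mu u v m =
      ∑ i, (Real.exp (m * lam i) • vecMulVec (u i) (u i) +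
        Real.exp (m * mu i) • vecMulVec (v i) (v i)) :=
  Finset.sum_congr rfl fun i _ => exp_smul_Xmat m (lam i) (mu i) (hu i) (hv i) (huv i)

theorem posSemidef_Efam (m : ℝ) : (Efam lam mu u v m).PosSemidef := by
  rw [Efam_eq lam mu hu hv huv]
  refine posSemidef_sum _ fun i _ => .add ?_ ?_ <;>
    exact .smul (posSemidef_vecMulVec_self_star _) (Real.exp_pos _).le

theorem trace_Efam (m : ℝ) :
    (Efam lam mu u v m).trace = ∑ i, (Real.exp (m * lam i) + Real.exp (m * mu i)) := by
  simp [Efam_eq lam mu hu hv huv, trace_sum, trace_vecMulVec, hu, hv]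

theorem exp_le_trace_Efam (m : ℝ) (i₀ : Fin k) :
    Real.exp (m * lam i₀) ≤ (Efam lam mu u v m).trace := by
  rw [trace_Efam lam mu hu hv huv]
  calc Real.exp (m * lam i₀) ≤ Real.exp (m * lam i₀) + Real.exp (m * mu i₀) :=
        le_add_of_nonneg_right (Real.exp_pos _).le
    _ ≤ _ := Finset.single_le_sum (f := fun i => Real.exp (m * lam i) + Real.exp (m * mu i))
        (fun i _ => by positivity) (Finset.mem_univ i₀)

theorem trace_Efam_le {m L : ℝ} (hm : 0 ≤ m) (hlam : ∀ i, lam i ≤ L) (hmu : ∀ i, mu i ≤ L) :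
    (Efam lam mu u v m).trace ≤ 2 * k * Real.exp (m * L) := by
  have hexp : ∀ {x}, x ≤ L → Real.exp (m * x) ≤ Real.exp (m * L) := fun hx =>
    Real.exp_le_exp.mpr (mul_le_mul_of_nonneg_left hx hm)
  rw [trace_Efam lam mu hu hv huv]
  calc ∑ i, (Real.exp (m * lam i) + Real.exp (m * mu i))
      ≤ ∑ _i : Fin k, 2 * Real.exp (m * L) :=
        Finset.sum_le_sum fun i _ => by linarith [hexp (hlam i), hexp (hmu i)]
    _ = 2 * k * Real.exp (m * L) := by simp; ring

end Efam

theorem log_lmax_tendsto_general (n : ℕ) (lam mu : Fin (n + 1) → ℝ)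
    (u v : Fin (n + 1) → Fin 2 → ℝ)
    (hu : ∀ i, u i ⬝ᵥ u i = 1) (hv : ∀ i, v i ⬝ᵥ v i = 1)
    (huv : ∀ i, u i ⬝ᵥ v i = 0) (hle : ∀ i, mu i ≤ lam i)
    (hmax : ∀ i, i ≠ 0 → lam i < lam 0 ∧ mu i < lam 0) :
    Tendsto (fun m : ℝ => (1 / m) * Real.log (lmax (Efam lam mu u v m)))
      atTop (nhds (lam 0)) := by
  have hlam : ∀ i, lam i ≤ lam 0 := fun i => by
    rcases eq_or_ne i 0 with rfl | hi
    · rfl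
    · exact (hmax i hi).1.le
  simp_rw [one_div_mul_eq_div]
  refine tendsto_log_div_of_mul_exp_le_of_le_mul_exp (a := 1 / 2) (b := 2 * ↑(n + 1))
    one_half_pos (.of_forall fun m => ?_) ((eventually_ge_atTop 0).mono fun m hm => ?_)
  · calc 1 / 2 * Real.exp (m * lam 0) ≤ (Efam lam mu u v m).trace / 2 := by
          linarith [exp_le_trace_Efam lam mu hu hv huv m 0]
      _ ≤ lmax (Efam lam mu u v m) := trace_div_two_le_lmax _
  · calc lmax (Efam lam mu u v m) ≤ (Efam lam mu u v m).trace :=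
          lmax_le_trace (posSemidef_Efam lam mu hu hv huv m)
      _ ≤ _ := trace_Efam_le lam mu hu hv huv hm hlam fun i => (hle i).trans (hlam i)

/-- Lemma 2: if `λ_1` is the unique largest eigenvalue of the
family, then `(1/m)·log(λmax(E_m)) → λ_1` as `m → ∞`. -/
theorem log_lmax_tendsto (n : ℕ) (lam mu : Fin (n + 1) → ℝ)
    (u v : Fin (n + 1) → Fin 2 → ℝ)
    (hu : ∀ i, u i ⬝ᵥ u i = 1) (hv : ∀ i, v i ⬝ᵥ v i = 1)
    (huv : ∀ i, u i ⬝ᵥ v i = 0) (hle : ∀ i, mu i ≤ lam i)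
    (hmu : mu 0 < lam 0)
    (hmax : ∀ i, i ≠ 0 → lam i < lam 0 ∧ mu i < lam 0) :
    Tendsto (fun m : ℝ => (1 / m) * Real.log (lmax (Efam lam mu u v m)))
      atTop (nhds (lam 0)) :=
  log_lmax_tendsto_general n lam mu u v hu hv huv hle hmax
end

section
/- Let λ_1 ∈ ℝ and for k = 1, 2 let X_k = λ_1·u_k u_kᵀ + μ_k·v_k v_kᵀ, where u_k, v_k ∈ ℝ² are orthonormal and μ_k ≤ λ_1, and suppose u_1 and u_2 are not parallel. Then: (a) λ_1·I − X_k is positive semidefinite for k = 1, 2; and (b) if Y is a real symmetric 2×2 matrix such that Y − X_1 and Y − X_2 are positive semidefinite and λmax(Y) ≤ λ_1, then Y = λ_1·I. (This is the content of Theorem 2: when the largest eigenvalue λ_1 is attained by two matrices with non-aligned major eigenvectors, the log-exp-supremum equals λ_1·I.) -/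
/-!
Since `u, v` is an orthonormal basis, `u uᵀ + v vᵀ = I`, so `λ I - X = (λ - μ) v vᵀ ⪰ 0`.
For (b), `λmax Y ≤ λ` makes `λ I - Y` positive semidefinite, while `Y - X_k ⪰ 0` and
`X_k u_k = λ u_k` give `u_kᵀ (λ I - Y) u_k ≤ 0`; hence `u_k` lies in the kernel of `λ I - Y`.
The non-parallel vectors `u_1, u_2` span `ℝ²`, so `λ I - Y = 0`.
-/

open Matrix

/-- Two vectors of ℝ² are parallel (aligned) if one is a scalar multiple of
the other. -/
def Parallel (a b : Fin 2 → ℝ) : Prop :=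
  ∃ c : ℝ, a = c • b ∨ b = c • a

theorem posSemidef_of_isSymm_of_trace_nonneg_of_det_nonneg {A : Matrix (Fin 2) (Fin 2) ℝ}
    (hA : A.IsSymm) (htr : 0 ≤ A.trace) (hdet : 0 ≤ A.det) : A.PosSemidef := by
  have hsymm : A 1 0 = A 0 1 := hA.apply 0 1
  rw [trace_fin_two] at htr
  rw [det_fin_two, hsymm] at hdet
  refine .of_dotProduct_mulVec_nonneg (by simpa [IsHermitian, IsSymm] using hA) fun x => ?_
  simp only [star_trivial, dotProduct, mulVec, Fin.sum_univ_two, hsymm]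
  -- `a · q(x) = (a x₀ + b x₁)² + det A · x₁²` with `a = A 0 0`, `b = A 0 1`
  have ha : 0 ≤ A 0 0 := by nlinarith [sq_nonneg (A 0 1)]
  rcases ha.eq_or_lt with ha | ha
  · have hb : A 0 1 = 0 := by nlinarith [sq_nonneg (A 0 1)]
    rw [← ha, hb]
    nlinarith [sq_nonneg (x 1)]
  · nlinarith [sq_nonneg (A 0 0 * x 0 + A 0 1 * x 1), mul_nonneg hdet (sq_nonneg (x 1))]

theorem smul_one_sub_posSemidef_of_lmax_le {Y : Matrix (Fin 2) (Fin 2) ℝ} (hY : Y.IsSymm)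
    {lam : ℝ} (h : lmax Y ≤ lam) : (lam • (1 : Matrix (Fin 2) (Fin 2) ℝ) - Y).PosSemidef := by
  have hsymm : Y 1 0 = Y 0 1 := hY.apply 0 1
  set t := Y.trace
  set s := Real.sqrt (t ^ 2 - 4 * Y.det)
  have hdisc : 0 ≤ t ^ 2 - 4 * Y.det := by
    simp only [t, trace_fin_two, det_fin_two, hsymm]
    nlinarith [sq_nonneg (Y 0 0 - Y 1 1), sq_nonneg (Y 0 1)]
  have hs : 0 ≤ s := Real.sqrt_nonneg _
  have hs2 : s ^ 2 = t ^ 2 - 4 * Y.det := Real.sq_sqrt hdisc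
  have hle : t + s ≤ 2 * lam := by unfold lmax at h; linarith
  refine posSemidef_of_isSymm_of_trace_nonneg_of_det_nonneg
    ((isSymm_one.smul lam).sub hY) ?_ ?_
  · have : (lam • (1 : Matrix (Fin 2) (Fin 2) ℝ) - Y).trace = 2 * lam - t := by
      simp only [t, trace_sub, trace_smul, trace_one, Fintype.card_fin, Nat.cast_ofNat, smul_eq_mul]
      ring
    rw [this]; linarith
  · have : (lam • (1 : Matrix (Fin 2) (Fin 2) ℝ) - Y).det = lam ^ 2 - lam * t + Y.det := by
      simp only [t, det_fin_two, trace_fin_two, Matrix.sub_apply, Matrix.smul_apply, one_apply_eq,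
        one_apply_ne zero_ne_one, one_apply_ne one_ne_zero, smul_eq_mul]
      ring
    rw [this]
    -- `λ² - λ t + det Y = (λ - (t + s) / 2) (λ - (t - s) / 2)`
    nlinarith [mul_nonneg (by linarith : 0 ≤ 2 * lam - t - s) (by linarith : 0 ≤ 2 * lam - t + s)]

theorem vecMulVec_add_vecMulVec_eq_one {u v : Fin 2 → ℝ} (hu : u ⬝ᵥ u = 1) (hv : v ⬝ᵥ v = 1)
    (huv : u ⬝ᵥ v = 0) : vecMulVec u u + vecMulVec v v = 1 := by
  simp only [dotProduct, Fin.sum_univ_two] at hu hv huv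
  ext i j
  fin_cases i <;> fin_cases j <;>
    simp only [Fin.zero_eta, Fin.mk_one, Matrix.add_apply, vecMulVec_apply, one_apply, Fin.isValue,
      Fin.reduceEq, ↓reduceIte]
  · linear_combination (1 - v 0 * v 0) * hu + (u 1 * u 1) * hv + (u 0 * v 0 - u 1 * v 1) * huv
  · linear_combination -(u 0 * u 1) * hv - (v 0 * v 1) * hu + (u 1 * v 0 + u 0 * v 1) * huv
  · linear_combination -(u 0 * u 1) * hv - (v 0 * v 1) * hu + (u 1 * v 0 + u 0 * v 1) * huv
  · linear_combination (1 - v 1 * v 1) * hu + (u 0 * u 0) * hv + (u 1 * v 1 - u 0 * v 0) * huv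

theorem smul_one_sub_Xmat {lam mu : ℝ} {u v : Fin 2 → ℝ} (hu : u ⬝ᵥ u = 1) (hv : v ⬝ᵥ v = 1)
    (huv : u ⬝ᵥ v = 0) : lam • (1 : Matrix (Fin 2) (Fin 2) ℝ) - Xmat lam mu u v =
      (lam - mu) • vecMulVec v v := by
  rw [Xmat, ← vecMulVec_add_vecMulVec_eq_one hu hv huv]
  module

theorem smul_one_sub_Xmat_posSemidef {lam mu : ℝ} {u v : Fin 2 → ℝ} (hu : u ⬝ᵥ u = 1)
    (hv : v ⬝ᵥ v = 1) (huv : u ⬝ᵥ v = 0) (hmu : mu ≤ lam) :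
    (lam • (1 : Matrix (Fin 2) (Fin 2) ℝ) - Xmat lam mu u v).PosSemidef := by
  rw [smul_one_sub_Xmat hu hv huv]
  exact (posSemidef_vecMulVec_self_star v).smul (sub_nonneg.mpr hmu)

theorem Xmat_mulVec_left {lam mu : ℝ} {u v : Fin 2 → ℝ} (hu : u ⬝ᵥ u = 1) (huv : u ⬝ᵥ v = 0) :
    Xmat lam mu u v *ᵥ u = lam • u := by
  simp [Xmat, add_mulVec, smul_mulVec, vecMulVec_mulVec, hu, dotProduct_comm v u, huv]

theorem mulVec_eq_zero_of_posSemidef_sub {n : Type*} [Fintype n] [DecidableEq n]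
    {lam : ℝ} {X Y : Matrix n n ℝ} {u : n → ℝ}
    (hlam : (lam • (1 : Matrix n n ℝ) - Y).PosSemidef) (hXY : (Y - X).PosSemidef)
    (hu : X *ᵥ u = lam • u) : (lam • (1 : Matrix n n ℝ) - Y) *ᵥ u = 0 := by
  have h : (lam • (1 : Matrix n n ℝ) - Y) *ᵥ u = -((Y - X) *ᵥ u) := by
    rw [sub_mulVec, sub_mulVec, smul_mulVec, one_mulVec, ← hu]; abel
  refine (hlam.dotProduct_mulVec_zero_iff u).mp (le_antisymm ?_ (hlam.dotProduct_mulVec_nonneg u))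
  rw [h, dotProduct_neg, neg_nonpos]
  exact hXY.dotProduct_mulVec_nonneg u

theorem linearIndependent_of_not_parallel {a b : Fin 2 → ℝ} (h : ¬ Parallel a b) :
    LinearIndependent ℝ ![a, b] := by
  refine LinearIndependent.pair_iff.mpr fun s t hst => ?_
  by_contra hne
  apply h
  by_cases hs : s = 0
  · have ht : t ≠ 0 := fun ht => hne ⟨hs, ht⟩
    exact ⟨0, Or.inr (by simpa [hs, ht] using hst)⟩
  · refine ⟨-t / s, Or.inl ?_⟩
    rw [← inv_smul_smul₀ hs a, eq_neg_of_add_eq_zero_left hst]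
    module

theorem eq_zero_of_mulVec_eq_zero_of_linearIndependent {K n : Type*} [Field K] [Fintype n]
    [DecidableEq n] {M : Matrix n n K} {b : n → n → K} (hb : LinearIndependent K b)
    (hM : ∀ i, M *ᵥ b i = 0) : M = 0 := by
  let B := basisOfLinearIndependentOfCardEqFinrank' b hb (by simp)
  have : toLin' M = 0 := B.ext fun i => by simpa [B] using hM i
  simpa using this

/-- Theorem 2: if `λ_1` is attained as major eigenvalue of two
matrices with non-aligned major eigenvectors, then (a) `λ_1·I` is a Loewner
upper bound of both matrices, and (b) any symmetric Loewner upper bound `Y`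
of both with `λmax(Y) ≤ λ_1` equals `λ_1·I`. -/
theorem les_eq_smul_identity (lam1 mu1 mu2 : ℝ) (u1 v1 u2 v2 : Fin 2 → ℝ)
    (hu1 : u1 ⬝ᵥ u1 = 1) (hv1 : v1 ⬝ᵥ v1 = 1) (huv1 : u1 ⬝ᵥ v1 = 0)
    (hu2 : u2 ⬝ᵥ u2 = 1) (hv2 : v2 ⬝ᵥ v2 = 1) (huv2 : u2 ⬝ᵥ v2 = 0)
    (hmu1 : mu1 ≤ lam1) (hmu2 : mu2 ≤ lam1)
    (hpar : ¬ Parallel u1 u2) :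
    ((lam1 • (1 : Matrix (Fin 2) (Fin 2) ℝ) - Xmat lam1 mu1 u1 v1).PosSemidef ∧
      (lam1 • (1 : Matrix (Fin 2) (Fin 2) ℝ) - Xmat lam1 mu2 u2 v2).PosSemidef) ∧
    ∀ Y : Matrix (Fin 2) (Fin 2) ℝ, Y.IsSymm →
      (Y - Xmat lam1 mu1 u1 v1).PosSemidef → (Y - Xmat lam1 mu2 u2 v2).PosSemidef →
      lmax Y ≤ lam1 → Y = lam1 • (1 : Matrix (Fin 2) (Fin 2) ℝ) := by
  refine ⟨⟨smul_one_sub_Xmat_posSemidef hu1 hv1 huv1 hmu1,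
    smul_one_sub_Xmat_posSemidef hu2 hv2 huv2 hmu2⟩, fun Y hY hY1 hY2 hlmax => ?_⟩
  have hpsd := smul_one_sub_posSemidef_of_lmax_le hY hlmax
  have hker : ∀ i, (lam1 • (1 : Matrix (Fin 2) (Fin 2) ℝ) - Y) *ᵥ ![u1, u2] i = 0 := by
    intro i
    fin_cases i
    · exact mulVec_eq_zero_of_posSemidef_sub hpsd hY1 (Xmat_mulVec_left hu1 huv1)
    · exact mulVec_eq_zero_of_posSemidef_sub hpsd hY2 (Xmat_mulVec_left hu2 huv2)
  have hzero := eq_zero_of_mulVec_eq_zero_of_linearIndependent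
    (linearIndependent_of_not_parallel hpar) hker
  exact (sub_eq_zero.mp hzero).symm
end

section
/- Let Y_1 and Y_2 be real symmetric 2×2 matrices, let α ∈ [0,1], and set Z := α·Y_1 + (1−α)·Y_2. Then either λmax(Z) < α·λmax(Y_1) + (1−α)·λmax(Y_2), or λmax(Z) = α·λmax(Y_1) + (1−α)·λmax(Y_2) and λmin(Z) ≤ α·λmin(Y_1) + (1−α)·λmin(Y_2). That is, the map φ(Y) = (λmax(Y), λmin(Y)) is convex with respect to the lexicographic order on ℝ². (Theorem 4(ii).) -/
open Matrix

/-- Smallest eigenvalue of a real 2×2 matrix via trace and determinant. -/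
noncomputable def lmin (M : Matrix (Fin 2) (Fin 2) ℝ) : ℝ :=
  (M.trace - Real.sqrt (M.trace ^ 2 - 4 * M.det)) / 2

/-!
For a symmetric `M = [[a, b], [b, d]]` the eigengap `λmax − λmin = √((a − d)² + (2b)²)` is the norm
of the vector `(a − d, 2b)`, which depends linearly on `M`. Hence `λmax = (tr M + ‖(a − d, 2b)‖) / 2`
is convex on symmetric matrices. Since `λmin + λmax = tr M` is linear, equality in the convexity
inequality for `λmax` forces equality for `λmin`.
-/

def eigengapVec : Matrix (Fin 2) (Fin 2) ℝ →ₗ[ℝ] ℂ where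
  toFun M := ⟨M 0 0 - M 1 1, 2 * M 0 1⟩
  map_add' M N := by
    apply Complex.ext <;> simp only [Matrix.add_apply, Complex.add_re, Complex.add_im] <;> ring
  map_smul' c M := by
    apply Complex.ext <;>
      simp only [Matrix.smul_apply, smul_eq_mul, Real.ringHom_apply, Complex.real_smul,
        Complex.mul_re, Complex.mul_im, Complex.ofReal_re, Complex.ofReal_im, zero_mul,
        sub_zero, add_zero] <;>
      ring

lemma norm_eigengapVec {M : Matrix (Fin 2) (Fin 2) ℝ} (hM : M.IsSymm) :
    ‖eigengapVec M‖ = Real.sqrt (M.trace ^ 2 - 4 * M.det) := by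
  rw [Complex.norm_def, Complex.normSq_mk, trace_fin_two, det_fin_two, hM.apply 0 1]
  congr 1
  simp only [eigengapVec, LinearMap.coe_mk, AddHom.coe_mk]
  ring

lemma lmax_eq_of_isSymm {M : Matrix (Fin 2) (Fin 2) ℝ} (hM : M.IsSymm) :
    lmax M = (M.trace + ‖eigengapVec M‖) / 2 := by
  rw [lmax, norm_eigengapVec hM]

lemma lmin_add_lmax (M : Matrix (Fin 2) (Fin 2) ℝ) : lmin M + lmax M = M.trace := by
  unfold lmin lmax
  ring

lemma convex_setOf_isSymm : Convex ℝ {M : Matrix (Fin 2) (Fin 2) ℝ | M.IsSymm} :=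
  fun _ hM _ hN a b _ _ _ => (hM.smul a).add (hN.smul b)

lemma convexOn_lmax : ConvexOn ℝ {M : Matrix (Fin 2) (Fin 2) ℝ | M.IsSymm} lmax := by
  have hnorm := ((convexOn_norm convex_univ).comp_linearMap eigengapVec).subset
    (Set.subset_univ _) convex_setOf_isSymm
  refine (((traceLinearMap (Fin 2) ℝ ℝ).convexOn convex_setOf_isSymm).add hnorm
    |>.smul (c := (1 / 2 : ℝ)) (by norm_num)).congr fun M hM => ?_
  simp only [one_div, Pi.add_apply, traceLinearMap_apply, Function.comp_apply, smul_eq_mul,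
    lmax_eq_of_isSymm hM]
  ring

/-- Theorem 4(ii): the map `Y ↦ (λmax(Y), λmin(Y))` is convex
with respect to the lexicographic order on ℝ²: for
`Z = α·Y_1 + (1−α)·Y_2`, either `λmax(Z)` is strictly below the convex
combination of the `λmax`'s, or it equals it and `λmin(Z)` is at most the
convex combination of the `λmin`'s. -/
theorem eigenpair_lex_convex (Y₁ Y₂ : Matrix (Fin 2) (Fin 2) ℝ)
    (hY₁ : Y₁.IsSymm) (hY₂ : Y₂.IsSymm)
    (α : ℝ) (hα0 : 0 ≤ α) (hα1 : α ≤ 1) :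
    lmax (α • Y₁ + (1 - α) • Y₂) < α * lmax Y₁ + (1 - α) * lmax Y₂ ∨
      (lmax (α • Y₁ + (1 - α) • Y₂) = α * lmax Y₁ + (1 - α) * lmax Y₂ ∧
        lmin (α • Y₁ + (1 - α) • Y₂) ≤ α * lmin Y₁ + (1 - α) * lmin Y₂) := by
  have hle : lmax (α • Y₁ + (1 - α) • Y₂) ≤ α * lmax Y₁ + (1 - α) * lmax Y₂ :=
    convexOn_lmax.2 hY₁ hY₂ hα0 (sub_nonneg.2 hα1) (add_sub_cancel α 1)
  refine hle.lt_or_eq.imp_right fun heq => ⟨heq, le_of_eq ?_⟩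
  have htrace : (α • Y₁ + (1 - α) • Y₂).trace = α * Y₁.trace + (1 - α) * Y₂.trace := by
    rw [trace_add, trace_smul, trace_smul, smul_eq_mul, smul_eq_mul]
  linear_combination lmin_add_lmax (α • Y₁ + (1 - α) • Y₂) - α * lmin_add_lmax Y₁
    - (1 - α) * lmin_add_lmax Y₂ - heq + htrace
end

section
/- Let λ, μ, c, s ∈ ℝ with 0 ≤ μ ≤ λ < 1, c² + s² = 1 and s ≠ 0, and let ε ∈ ℝ with 0 < ε ≤ λ. Then there exists P > 0 such that for every real p ≥ P one has (λ − ε)^p < λ^p − c²·(1 − λ^p)·(λ^p − μ^p) / (1 − λ^p·c² − μ^p·s²), where x^p denotes the real power for x ≥ 0 (with 0^p = 0); note the denominator satisfies 1 − λ^p·c² − μ^p·s² ≥ 1 − λ^p > 0. (This is the key scalar estimate in the proof of Theorem 4(iii): no lowering of the second eigenvalue of the log-exp-supremum by ε > 0 remains a p-power upper bound for all p > 0, so the log-exp-supremum is the unique minimiser over the super-upper bound cone U_*(𝒳).) -/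
/-!
Since `μ^p ≤ λ^p < 1`, the denominator is at least `1 - λ^p`, so the subtracted fraction is at most
`c²·(λ^p − μ^p)` and the right-hand side is at least `s²·λ^p`. As `s² > 0` and `λ − ε < λ`,
`(λ − ε)^p = ((λ − ε)/λ)^p · λ^p` falls below `s²·λ^p` once `p` is large.
-/

open Filter Topology

lemma sq_mul_le_sub_div {a b c s : ℝ} (hb : 0 ≤ b) (hba : b ≤ a) (ha : a < 1)
    (hcs : c ^ 2 + s ^ 2 = 1) :
    s ^ 2 * a ≤ a - c ^ 2 * (1 - a) * (a - b) / (1 - a * c ^ 2 - b * s ^ 2) := by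
  have hc2 : 0 ≤ c ^ 2 := sq_nonneg c
  have hs2 : s ^ 2 = 1 - c ^ 2 := by linarith
  have hden : 1 - a ≤ 1 - a * c ^ 2 - b * s ^ 2 := by
    rw [hs2]; nlinarith [mul_nonneg hc2 (sub_nonneg.2 hba)]
  have hfrac : c ^ 2 * (1 - a) * (a - b) / (1 - a * c ^ 2 - b * s ^ 2) ≤ c ^ 2 * (a - b) := by
    rw [div_le_iff₀ (by linarith)]
    nlinarith [mul_nonneg hc2 (sub_nonneg.2 hba)]
  nlinarith

lemma eventually_rpow_lt_mul_rpow {x y t : ℝ} (hx : 0 ≤ x) (hxy : x < y) (ht : 0 < t) :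
    ∀ᶠ p : ℝ in atTop, x ^ p < t * y ^ p := by
  have hy : 0 < y := hx.trans_lt hxy
  have hratio : Tendsto (fun p : ℝ ↦ (x / y) ^ p) atTop (𝓝 0) :=
    tendsto_rpow_atTop_of_base_lt_one _ (by linarith [div_nonneg hx hy.le])
      ((div_lt_one hy).2 hxy)
  filter_upwards [hratio.eventually_lt_const ht] with p hp
  calc x ^ p = (x / y) ^ p * y ^ p := by
        rw [← Real.mul_rpow (div_nonneg hx hy.le) hy.le, div_mul_cancel₀ _ hy.ne']
    _ < t * y ^ p := mul_lt_mul_of_pos_right hp (Real.rpow_pos_of_pos hy p)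

/-- key scalar estimate of Theorem 4(iii): for
`0 ≤ μ ≤ λ < 1`, `c² + s² = 1`, `s ≠ 0` and `0 < ε ≤ λ`, eventually in the
real exponent `p` one has
`(λ − ε)^p < λ^p − c²·(1 − λ^p)·(λ^p − μ^p)/(1 − λ^p·c² − μ^p·s²)`,
where `x ^ p` denotes the real power. -/
theorem eventually_power_gap (lam mu c s : ℝ)
    (hmu0 : 0 ≤ mu) (hmule : mu ≤ lam) (hlam1 : lam < 1)
    (hcs : c ^ 2 + s ^ 2 = 1) (hs : s ≠ 0)
    (ε : ℝ) (hε0 : 0 < ε) (hepslam : ε ≤ lam) :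
    ∃ P : ℝ, 0 < P ∧ ∀ p : ℝ, P ≤ p →
      (lam - ε) ^ p <
        lam ^ p - c ^ 2 * (1 - lam ^ p) * (lam ^ p - mu ^ p) /
          (1 - lam ^ p * c ^ 2 - mu ^ p * s ^ 2) := by
  have hlam0 : 0 ≤ lam := hε0.le.trans hepslam
  obtain ⟨P, hP⟩ := eventually_atTop.1 <|
    (eventually_rpow_lt_mul_rpow (sub_nonneg.2 hepslam) (sub_lt_self lam hε0)
      (sq_pos_of_ne_zero hs)).and (eventually_gt_atTop (0 : ℝ))
  refine ⟨max P 1, by positivity, fun p hp ↦ ?_⟩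
  obtain ⟨hlt, hp0⟩ := hP p (le_of_max_le_left hp)
  exact hlt.trans_le <| sq_mul_le_sub_div (Real.rpow_nonneg hmu0 p)
    (Real.rpow_le_rpow hmu0 hmule hp0.le) (Real.rpow_lt_one hlam0 hlam1 hp0) hcs
end
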